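/- Let σ₁, …, σ_{m−1} > 0 and σ_m < 0 with ∑_{i=1}^{m} 1/σᵢ < 0. Then there exist positive reals θ₁, …, θ_{m−1} such that σᵢ + σ_m θᵢ > 0 for each i and ∑_{i=1}^{m−1} 1/θᵢ = 1. -/
import Mathlib


theorem stmt17 (n : ℕ) (hn : 0 < n) (σ : Fin n → ℝ) (σm : ℝ)
    (hσ : ∀ i, 0 < σ i) (hσm : σm < 0)
    (hsum : (∑ i, 1 / σ i) + 1 / σm < 0) :
    ∃ θ : Fin n → ℝ,
      (∀ i, 0 < θ i) ∧ (∀ i, 0 < σ i + σm * θ i) ∧ (∑ i, 1 / θ i) = 1 := by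
  set S := ∑ i, 1 / σ i with hS
  have hSpos : 0 < S := by
    apply Finset.sum_pos
    · intro i _
      exact one_div_pos.mpr (hσ i)
    · exact Finset.univ_nonempty_iff.mpr ⟨⟨0, hn⟩⟩
  have hSlt : S < -1 / σm := by
    have : -(1 / σm) = -1 / σm := by ring
    linarith [this]
  have hkey : -1 < σm * S := by
    have h := (lt_div_iff_of_neg hσm).mp hSlt
    nlinarith
  refine ⟨fun i => S * σ i, ?_, ?_, ?_⟩
  · intro i; exact mul_pos hSpos (hσ i)
  · intro i
    have : σ i + σm * (S * σ i) = σ i * (1 + σm * S) := by ring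
    rw [this]
    exact mul_pos (hσ i) (by linarith)
  · have : ∀ i, 1 / (S * σ i) = (1 / S) * (1 / σ i) := by
      intro i; rw [one_div, mul_inv, one_div, one_div]
    simp only [this, ← Finset.mul_sum, ← hS]
    field_simp
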